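/- arXiv:2304.08376 — 9 statements merged into one kernel-verified Lean document; each statement's English description precedes it below -/
import Mathlib

section
/- Let p be an odd prime, n : ℕ, ι a finite index type, v : ι → (Fin n → ZMod p), and c : ι → ZMod p a function that is not identically zero such that Σ_i (c i) • (v i) = 0. Then there exist (p-1)/2 signed subsets ε₁, …, ε_{(p-1)/2} of v with pairwise disjoint supports, not all with empty support, whose signed sums s₁, …, s_{(p-1)/2} satisfy Σ_{i=1}^{(p-1)/2} i • s_i = 0. -/
/-- A signed subset of a family indexed by `ι` is a function `ε : ι → ℤ`
taking values in `{-1, 0, 1}`. -/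
def IsSignedSubset {ι : Type*} (ε : ι → ℤ) : Prop :=
  ∀ j, ε j = -1 ∨ ε j = 0 ∨ ε j = 1

/-- The signed sum of the family `v` over the signed subset `ε`. -/
def signedSum {ι : Type*} [Fintype ι] {p n : ℕ} (v : ι → Fin n → ZMod p)
    (ε : ι → ℤ) : Fin n → ZMod p :=
  ∑ j, ε j • v j

/-- A family of signed subsets has pairwise disjoint supports. -/
def DisjointSupports {ι κ : Type*} (ε : κ → ι → ℤ) : Prop :=
  ∀ i i', i ≠ i' → ∀ j, ε i j = 0 ∨ ε i' j = 0

theorem relation_to_standard_relation (p : ℕ) (hp : p.Prime) (hodd : Odd p)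
    (n : ℕ) (ι : Type*) [Fintype ι] (v : ι → Fin n → ZMod p)
    (c : ι → ZMod p) (hc : c ≠ 0) (hrel : ∑ j, c j • v j = 0) :
    ∃ ε : Fin ((p - 1) / 2) → ι → ℤ,
      (∀ i, IsSignedSubset (ε i)) ∧
      DisjointSupports ε ∧
      (∃ i j, ε i j ≠ 0) ∧
      ∑ i : Fin ((p - 1) / 2), ((i : ℕ) + 1) • signedSum v (ε i) = 0 := by
  haveI : NeZero p := ⟨hp.ne_zero⟩
  have hp2 : p % 2 = 1 := Nat.odd_iff.mp hodd
  have hp3 : 3 ≤ p := by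
    rcases hp.two_le.lt_or_eq with h | h
    · omega
    · omega
  set m := (p - 1) / 2 with hm
  have hmp : 2 * m + 1 = p := by omega
  -- ε i j = 1 if (c j).val = i+1, -1 if (-(c j)).val = i+1, 0 otherwise
  refine ⟨fun i j => if (c j).val = (i : ℕ) + 1 then 1
    else if (-(c j)).val = (i : ℕ) + 1 then -1 else 0, ?_, ?_, ?_, ?_⟩
  · intro i j
    dsimp only
    split_ifs <;> simp
  · intro i i' hne j
    dsimp only
    by_contra hcon
    push_neg at hcon
    obtain ⟨h1, h2⟩ := hcon
    have hij : (c j).val = (i : ℕ) + 1 ∨ (-(c j)).val = (i : ℕ) + 1 := by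
      by_contra h; push_neg at h; simp [h.1, h.2] at h1
    have hij' : (c j).val = (i' : ℕ) + 1 ∨ (-(c j)).val = (i' : ℕ) + 1 := by
      by_contra h; push_neg at h; simp [h.1, h.2] at h2
    have hcj : c j ≠ 0 := by
      intro h
      rcases hij with h' | h' <;> simp [h] at h'
    have hneg : (-(c j)).val = p - (c j).val := by
      rw [ZMod.neg_val]; simp [hcj]
    have hvpos : 0 < (c j).val :=
      Nat.pos_of_ne_zero fun h => hcj ((ZMod.val_eq_zero _).mp h)
    have hvlt : (c j).val < p := ZMod.val_lt _
    have hi : (i : ℕ) < m := i.isLt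
    have hi' : (i' : ℕ) < m := i'.isLt
    have : (i : ℕ) = (i' : ℕ) := by
      rcases hij with h' | h' <;> rcases hij' with h'' | h'' <;> omega
    exact hne (Fin.ext this)
  · -- nonempty support
    have : ∃ j, c j ≠ 0 := by
      by_contra h; push_neg at h
      exact hc (funext fun j => h j)
    obtain ⟨j, hcj⟩ := this
    have hneg : (-(c j)).val = p - (c j).val := by
      rw [ZMod.neg_val]; simp [hcj]
    have hvpos : 0 < (c j).val :=
      Nat.pos_of_ne_zero fun h => hcj ((ZMod.val_eq_zero _).mp h)
    have hvlt : (c j).val < p := ZMod.val_lt _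
    by_cases hle : (c j).val ≤ m
    · refine ⟨⟨(c j).val - 1, by omega⟩, j, ?_⟩
      simp only
      rw [if_pos (by omega)]
      norm_num
    · refine ⟨⟨(-(c j)).val - 1, by omega⟩, j, ?_⟩
      simp only
      rw [if_neg (by omega), if_pos (by omega)]
      norm_num
  · -- the sum
    have key : ∀ j, ∑ i : Fin m, (((i : ℕ) + 1) : ZMod p) *
        (((if (c j).val = (i : ℕ) + 1 then 1
          else if (-(c j)).val = (i : ℕ) + 1 then -1 else 0 : ℤ)) : ZMod p) = c j := by
      intro j
      by_cases hcj : c j = 0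
      · rw [Finset.sum_eq_zero, hcj]
        intro i _
        have h0 : (c j).val = 0 := by simp [hcj]
        have h1 : (-(c j)).val = 0 := by simp [hcj]
        rw [if_neg (by omega), if_neg (by omega)]
        simp
      · have hneg : (-(c j)).val = p - (c j).val := by
          rw [ZMod.neg_val]; simp [hcj]
        have hvpos : 0 < (c j).val :=
          Nat.pos_of_ne_zero fun h => hcj ((ZMod.val_eq_zero _).mp h)
        have hvlt : (c j).val < p := ZMod.val_lt _
        by_cases hle : (c j).val ≤ m
        · set i₀ : Fin m := ⟨(c j).val - 1, by omega⟩
          rw [Finset.sum_eq_single i₀]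
          · have h1 : (i₀ : ℕ) + 1 = (c j).val := by simp [i₀]; omega
            rw [if_pos h1.symm]
            rw [show ((i₀ : ℕ) : ZMod p) + 1 = (((i₀ : ℕ) + 1 : ℕ) : ZMod p) by push_cast; ring,
              h1]
            simp [ZMod.natCast_val]
          · intro i _ hi
            have hine : (i : ℕ) + 1 ≠ (c j).val := by
              intro h
              apply hi; apply Fin.ext; simp [i₀]; omega
            have hi2 : (i : ℕ) < m := i.isLt
            rw [if_neg (fun h => hine h.symm), if_neg (by omega)]
            simp
          · intro h; exact absurd (Finset.mem_univ i₀) h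
        · set i₀ : Fin m := ⟨(-(c j)).val - 1, by omega⟩
          have hnv : 0 < (-(c j)).val := by omega
          rw [Finset.sum_eq_single i₀]
          · have h1 : (i₀ : ℕ) + 1 = (-(c j)).val := by simp [i₀]; omega
            rw [if_neg (by omega), if_pos h1.symm]
            rw [show ((i₀ : ℕ) : ZMod p) + 1 = (((i₀ : ℕ) + 1 : ℕ) : ZMod p) by push_cast; ring,
              h1, hneg]
            rw [show ((p - (c j).val : ℕ) : ZMod p) = - ((c j).val : ZMod p) by
              push_cast [Nat.cast_sub (le_of_lt hvlt)]; simp]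
            push_cast [ZMod.natCast_val, ZMod.cast_id]
            ring
          · intro i _ hi
            have hine : (i : ℕ) + 1 ≠ (-(c j)).val := by
              intro h
              apply hi; apply Fin.ext; simp [i₀]; omega
            have hi2 : (i : ℕ) < m := i.isLt
            rw [if_neg (by omega), if_neg (fun h => hine h.symm)]
            simp
          · intro h; exact absurd (Finset.mem_univ i₀) h
    -- now compute
    unfold signedSum
    rw [← hrel]
    simp only [Finset.smul_sum]
    rw [Finset.sum_comm]
    refine Finset.sum_congr rfl fun j _ => ?_
    calc ∑ i : Fin m, ((i : ℕ) + 1) •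
          ((if (c j).val = (i : ℕ) + 1 then (1:ℤ)
            else if (-(c j)).val = (i : ℕ) + 1 then -1 else 0) • v j)
        = ∑ i : Fin m, ((((i : ℕ) + 1) : ZMod p) *
            (((if (c j).val = (i : ℕ) + 1 then 1
              else if (-(c j)).val = (i : ℕ) + 1 then -1 else 0 : ℤ)) : ZMod p)) • v j := by
          refine Finset.sum_congr rfl fun i _ => ?_
          rw [← Nat.cast_smul_eq_nsmul (ZMod p), ← Int.cast_smul_eq_zsmul (ZMod p),
            smul_smul]
          push_cast
          ring_nf
      _ = c j • v j := by rw [← Finset.sum_smul, key j]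
end

section
/- Let p be an odd prime and n ≥ 1. Every family v : Fin (h (Nat.log 2 ((p-1)/2)) n) → (Fin n → ZMod p) admits a collision, i.e., two disjoint finite subsets A, B of indices, not both empty, with Σ_{i∈A} v i = Σ_{i∈B} v i. -/
/-- The sequence of coefficient bounds: `d 0 = (p-1)/2`, `d (i+1) = d i / 2`. -/
def dSeq (p : ℕ) : ℕ → ℕ
  | 0 => (p - 1) / 2
  | i + 1 => dSeq p i / 2

/-- The sequence of lengths: `h 0 m = m + 1`,
`h (i+1) m = h i m * h i (⌈d i / 2⌉ * m)`. -/
def hSeq (p : ℕ) : ℕ → ℕ → ℕ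
  | 0, m => m + 1
  | i + 1, m => hSeq p i m * hSeq p i (((dSeq p i + 1) / 2) * m)

/-- A collision in a family `v`: two disjoint finite subsets of indices,
not both empty, with equal sums. -/
def HasCollision {ι : Type*} {p n : ℕ} (v : ι → Fin n → ZMod p) : Prop :=
  ∃ A B : Finset ι, Disjoint A B ∧ ¬(A = ∅ ∧ B = ∅) ∧
    ∑ i ∈ A, v i = ∑ i ∈ B, v i

lemma dSeq_eq (p i : ℕ) : dSeq p i = (p - 1) / 2 / 2 ^ i := by
  induction i with
  | zero => simp [dSeq]
  | succ i ih =>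
    show dSeq p i / 2 = _
    rw [ih, Nat.div_div_eq_div_mul, ← pow_succ]

lemma hSeq_lb (p : ℕ) :
    ∀ i, (∀ j < i, 1 ≤ dSeq p j) → ∀ m, (m + 1) ^ (2 ^ i) ≤ hSeq p i m := by
  intro i
  induction i with
  | zero => intro _ m; simp [hSeq]
  | succ i ih =>
    intro hd m
    have hd' : ∀ j < i, 1 ≤ dSeq p j := fun j hj => hd j (hj.trans (Nat.lt_succ_self i))
    have h1 : (m + 1) ^ (2 ^ i) ≤ hSeq p i m := ih hd' m
    have hdi : 1 ≤ dSeq p i := hd i (Nat.lt_succ_self i)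
    have hm : m ≤ ((dSeq p i + 1) / 2) * m := by
      have h1' : 1 ≤ (dSeq p i + 1) / 2 := by omega
      calc m = 1 * m := (one_mul m).symm
        _ ≤ ((dSeq p i + 1) / 2) * m := Nat.mul_le_mul_right m h1'
    have h2 : (m + 1) ^ (2 ^ i) ≤ hSeq p i (((dSeq p i + 1) / 2) * m) :=
      le_trans (Nat.pow_le_pow_left (by omega) _) (ih hd' _)
    calc (m + 1) ^ (2 ^ (i + 1)) = (m + 1) ^ (2 ^ i) * (m + 1) ^ (2 ^ i) := by
          rw [← pow_add]; ring_nf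
      _ ≤ hSeq p i m * hSeq p i (((dSeq p i + 1) / 2) * m) := Nat.mul_le_mul h1 h2
      _ = hSeq p (i + 1) m := rfl

lemma two_mul_le_two_pow {K : ℕ} (hK : 1 ≤ K) : 2 * K ≤ 2 ^ K := by
  induction K with
  | zero => omega
  | succ K ih =>
    rcases Nat.eq_or_lt_of_le hK with h | h
    · have hK0 : K = 0 := by omega
      subst hK0; norm_num
    · have h1 : 1 ≤ K := by omega
      have h2 : 2 * K ≤ 2 ^ K := ih h1
      have h3 : 2 ≤ 2 ^ K := by
        calc 2 = 2 ^ 1 := rfl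
          _ ≤ 2 ^ K := Nat.pow_le_pow_right (by norm_num) h1
      calc 2 * (K + 1) = 2 * K + 2 := by ring
        _ ≤ 2 ^ K + 2 ^ K := by omega
        _ = 2 ^ (K + 1) := by rw [pow_succ]; ring

lemma add_two_le_four_pow {K : ℕ} (hK : 1 ≤ K) : K + 2 ≤ 4 ^ K := by
  induction K with
  | zero => omega
  | succ K ih =>
    rcases Nat.eq_or_lt_of_le hK with h | h
    · have hK0 : K = 0 := by omega
      subst hK0; norm_num
    · have h2 : K + 2 ≤ 4 ^ K := ih (by omega)
      have h4 : 4 ^ (K + 1) = 4 ^ K * 4 := pow_succ 4 K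
      omega

lemma arith_key {K n : ℕ} (hK : 1 ≤ K) (hn : 1 ≤ n) : (K + 2) * n ≤ (n + 1) ^ (2 ^ K) := by
  have c1 : (K + 2) * n ≤ 4 ^ K * n := Nat.mul_le_mul_right n (add_two_le_four_pow hK)
  have c2 : 4 ^ K * n ≤ 4 ^ K * n ^ K := Nat.mul_le_mul_left _ (Nat.le_self_pow (by omega) n)
  have c3 : 4 ^ K * n ^ K = (4 * n) ^ K := (mul_pow 4 n K).symm
  have c4 : (4 * n) ^ K ≤ ((n + 1) ^ 2) ^ K := by
    apply Nat.pow_le_pow_left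
    nlinarith [Nat.one_le_iff_ne_zero.mp hn]
  have c5 : ((n + 1) ^ 2) ^ K = (n + 1) ^ (2 * K) := by rw [← pow_mul]
  have c6 : (n + 1) ^ (2 * K) ≤ (n + 1) ^ (2 ^ K) :=
    Nat.pow_le_pow_right (by omega) (two_mul_le_two_pow hK)
  omega

lemma zmod3_cases (x : ZMod 3) : x = 0 ∨ x = 1 ∨ x = 2 := by revert x; decide
lemma zmod3_two_eq_neg_one : (2 : ZMod 3) = -1 := by decide
lemma zmod3_ne01 : ¬ (0 : ZMod 3) = 1 := by decide
lemma zmod3_ne02 : ¬ (0 : ZMod 3) = 2 := by decide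
lemma zmod3_ne12 : ¬ (1 : ZMod 3) = 2 := by decide
lemma zmod3_ne21 : ¬ (2 : ZMod 3) = 1 := by decide

theorem collision_existence (p : ℕ) (hp : p.Prime) (hodd : Odd p)
    (n : ℕ) (hn : 1 ≤ n)
    (v : Fin (hSeq p (Nat.log 2 ((p - 1) / 2)) n) → Fin n → ZMod p) :
    HasCollision v := by
  classical
  obtain ⟨k, hk⟩ := hodd
  have hp2 := hp.two_le
  have hp3 : 3 ≤ p := by omega
  have hd0 : (p - 1) / 2 = k := by omega
  by_cases hp5 : p = 3
  · -- p = 3 : linear algebra over ZMod 3, where every nonzero scalar is ±1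
    subst hp5
    have hlog : Nat.log 2 ((3 - 1) / 2) = 0 := by norm_num
    have hcard : Fintype.card (Fin (hSeq 3 (Nat.log 2 ((3 - 1) / 2)) n)) = n + 1 := by
      rw [hlog, Fintype.card_fin]; rfl
    have hnli : ¬ LinearIndependent (ZMod 3) v := by
      intro hli
      have h := hli.fintype_card_le_finrank
      rw [hcard, Module.finrank_fintype_fun_eq_card, Fintype.card_fin] at h
      omega
    rw [Fintype.not_linearIndependent_iff] at hnli
    obtain ⟨g, hsum, i0, hi0⟩ := hnli
    refine ⟨Finset.univ.filter (fun i => g i = 1), Finset.univ.filter (fun i => g i = 2),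
      ?_, ?_, ?_⟩
    · rw [Finset.disjoint_left]
      intro a ha hb
      simp only [Finset.mem_filter, Finset.mem_univ, true_and] at ha hb
      rw [ha] at hb
      exact zmod3_ne12 hb
    · rintro ⟨hA, hB⟩
      rcases zmod3_cases (g i0) with h | h | h
      · exact hi0 h
      · have hmem : i0 ∈ Finset.univ.filter (fun i => g i = 1) := by
          simp only [Finset.mem_filter, Finset.mem_univ, true_and]; exact h
        rw [hA] at hmem
        exact absurd hmem (Finset.notMem_empty i0)
      · have hmem : i0 ∈ Finset.univ.filter (fun i => g i = 2) := by
          simp only [Finset.mem_filter, Finset.mem_univ, true_and]; exact h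
        rw [hB] at hmem
        exact absurd hmem (Finset.notMem_empty i0)
    · have key : ∑ i ∈ Finset.univ.filter (fun i => g i = 1), v i
          - ∑ i ∈ Finset.univ.filter (fun i => g i = 2), v i = ∑ i, g i • v i := by
        rw [Finset.sum_filter, Finset.sum_filter, ← Finset.sum_sub_distrib]
        apply Finset.sum_congr rfl
        intro i _
        rcases zmod3_cases (g i) with h | h | h
        · have hne1 : ¬ g i = 1 := by rw [h]; exact zmod3_ne01
          have hne2 : ¬ g i = 2 := by rw [h]; exact zmod3_ne02
          rw [if_neg hne1, if_neg hne2, h, zero_smul, sub_zero]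
        · have hne2 : ¬ g i = 2 := by rw [h]; exact zmod3_ne12
          rw [if_pos h, if_neg hne2, h, one_smul, sub_zero]
        · have hne1 : ¬ g i = 1 := by rw [h]; exact zmod3_ne21
          rw [if_neg hne1, if_pos h, h, zmod3_two_eq_neg_one, neg_smul, one_smul, zero_sub]
      rw [hsum] at key
      exact sub_eq_zero.mp key
  · -- p ≥ 5 : counting + pigeonhole on subset sums
    haveI : NeZero p := ⟨hp.ne_zero⟩
    have hp5' : 5 ≤ p := by omega
    have hk2 : 2 ≤ k := by omega
    have hlogk : Nat.log 2 ((p - 1) / 2) = Nat.log 2 k := by rw [hd0]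
    have h2K : 2 ^ Nat.log 2 ((p - 1) / 2) ≤ k := by
      rw [hlogk]; exact Nat.pow_log_le_self 2 (by omega)
    have hK1 : 1 ≤ Nat.log 2 ((p - 1) / 2) := by
      rw [hlogk]
      exact (Nat.le_log_iff_pow_le (by norm_num) (by omega)).mpr (by simpa using hk2)
    have hdj : ∀ j < Nat.log 2 ((p - 1) / 2), 1 ≤ dSeq p j := by
      intro j hj
      rw [dSeq_eq, hd0]
      have h2j : 2 ^ j ≤ k := by
        have hle : 2 ^ j ≤ 2 ^ Nat.log 2 ((p - 1) / 2) :=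
          Nat.pow_le_pow_right (by norm_num) (le_of_lt hj)
        omega
      exact (Nat.one_le_div_iff (by positivity)).mpr h2j
    have hNlb : (n + 1) ^ (2 ^ Nat.log 2 ((p - 1) / 2)) ≤ hSeq p (Nat.log 2 ((p - 1) / 2)) n :=
      hSeq_lb p _ hdj n
    have hbig : (Nat.log 2 ((p - 1) / 2) + 2) * n ≤ hSeq p (Nat.log 2 ((p - 1) / 2)) n :=
      le_trans (arith_key hK1 hn) hNlb
    have hklt : k < 2 ^ (Nat.log 2 ((p - 1) / 2) + 1) := by
      rw [hlogk]
      exact Nat.lt_pow_succ_log_self (by norm_num) k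
    have hplt : p < 2 ^ (Nat.log 2 ((p - 1) / 2) + 2) := by
      calc p = 2 * k + 1 := hk
        _ < 2 * 2 ^ (Nat.log 2 ((p - 1) / 2) + 1) := by omega
        _ = 2 ^ (Nat.log 2 ((p - 1) / 2) + 2) := by
          rw [pow_succ 2 (Nat.log 2 ((p - 1) / 2) + 1)]; ring
    have hcardlt : p ^ n < 2 ^ hSeq p (Nat.log 2 ((p - 1) / 2)) n := by
      calc p ^ n < (2 ^ (Nat.log 2 ((p - 1) / 2) + 2)) ^ n :=
            Nat.pow_lt_pow_left hplt (by omega)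
        _ = 2 ^ ((Nat.log 2 ((p - 1) / 2) + 2) * n) := by rw [← pow_mul]
        _ ≤ _ := Nat.pow_le_pow_right (by norm_num) hbig
    have hcards : Fintype.card (Fin n → ZMod p) < Fintype.card (Finset (Fin (hSeq p (Nat.log 2 ((p - 1) / 2)) n))) := by
      rw [Fintype.card_finset, Fintype.card_fun, ZMod.card, Fintype.card_fin, Fintype.card_fin]
      exact hcardlt
    obtain ⟨S, T, hST, hsum⟩ :=
      Fintype.exists_ne_map_eq_of_card_lt (fun S : Finset (Fin (hSeq p (Nat.log 2 ((p - 1) / 2)) n)) => ∑ i ∈ S, v i) hcards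
    refine ⟨S \ T, T \ S, disjoint_sdiff_sdiff, ?_, ?_⟩
    · rintro ⟨hA, hB⟩
      rw [Finset.sdiff_eq_empty_iff_subset] at hA hB
      exact hST (le_antisymm hA hB)
    · have h1 : ∑ i ∈ S ∩ T, v i + ∑ i ∈ S \ T, v i = ∑ i ∈ S, v i :=
        Finset.sum_inter_add_sum_sdiff S T v
      have h2 : ∑ i ∈ S ∩ T, v i + ∑ i ∈ T \ S, v i = ∑ i ∈ T, v i := by
        rw [Finset.inter_comm]
        exact Finset.sum_inter_add_sum_sdiff T S v
      have h3 : ∑ i ∈ S ∩ T, v i + ∑ i ∈ S \ T, v i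
          = ∑ i ∈ S ∩ T, v i + ∑ i ∈ T \ S, v i := by
        rw [h1, h2]
        exact hsum
      have h4 := congrArg (fun x => x - ∑ i ∈ S ∩ T, v i) h3
      simpa using h4
end

section
/- Let p be a prime, n : ℕ, and S ≥ 1 a natural number. Assume that every family v : Fin S → (Fin n → ZMod p) admits a collision, i.e., two disjoint finite subsets A, B of indices, not both empty, with Σ_{i∈A} v i = Σ_{i∈B} v i. Then every family u : Fin (S ^ Nat.clog 2 p) → (Fin n → ZMod p) admits a nonempty zero-sum subsequence, i.e., a nonempty finite subset B of indices with Σ_{i∈B} u i = 0. -/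
lemma sum_blocks {S m : ℕ} {κ M : Type*} [DecidableEq κ] [AddCommMonoid M]
    (e : Fin S × Fin m → κ) (he : Function.Injective e) (u : κ → M)
    (C : Finset (Fin S)) (t : Fin S → Finset (Fin m))
    (htne : ∀ j ∈ C, (t j).Nonempty) (hC : C.Nonempty) :
    ∃ T : Finset κ, T.Nonempty ∧ ∑ i ∈ T, u i = ∑ j ∈ C, ∑ i ∈ t j, u (e (j, i)) := by
  have hinj : ∀ j : Fin S, Function.Injective (fun i => e (j, i)) := by
    intro j a b h
    have := he h
    simpa using this
  set f : (j : Fin S) → Finset κ := fun j => (t j).map ⟨fun i => e (j, i), hinj j⟩ with hf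
  have hdisj : (↑C : Set (Fin S)).PairwiseDisjoint f := by
    intro a _ b _ hab
    refine Finset.disjoint_left.mpr ?_
    rintro x hx hx'
    simp only [hf, Finset.mem_map, Function.Embedding.coeFn_mk] at hx hx'
    obtain ⟨i, _, rfl⟩ := hx
    obtain ⟨i', _, h⟩ := hx'
    exact hab ((Prod.ext_iff.mp (he h)).1).symm
  refine ⟨C.biUnion f, ?_, ?_⟩
  · rw [Finset.biUnion_nonempty]
    obtain ⟨j, hj⟩ := hC
    exact ⟨j, hj, by simpa [hf] using htne j hj⟩
  · rw [Finset.sum_biUnion hdisj]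
    refine Finset.sum_congr rfl fun j _ => ?_
    simp [hf]

lemma aux_scaled (p n S : ℕ)
    (hcoll : ∀ v : Fin S → Fin n → ZMod p, HasCollision v) :
    ∀ k, ∀ u : Fin (S ^ k) → Fin n → ZMod p,
      ∃ w : Fin n → ZMod p, ∀ c : ℕ, 1 ≤ c → c ≤ 2 ^ k →
        ∃ T : Finset (Fin (S ^ k)), T.Nonempty ∧ ∑ i ∈ T, u i = c • w := by
  intro k
  induction k with
  | zero =>
    intro u
    have h1 : 0 < S ^ 0 := by simp
    refine ⟨u ⟨0, h1⟩, ?_⟩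
    intro c hc1 hc2
    have hc : c = 1 := le_antisymm (by simpa using hc2) hc1
    subst hc
    exact ⟨{⟨0, h1⟩}, Finset.singleton_nonempty _, by rw [Finset.sum_singleton, one_smul]⟩
  | succ k ih =>
    intro u
    have hEq : S * S ^ k = S ^ (k + 1) := (pow_succ' S k).symm
    set e : Fin S × Fin (S ^ k) → Fin (S ^ (k + 1)) :=
      fun x => finCongr hEq (finProdFinEquiv x) with he_def
    have he : Function.Injective e :=
      (finCongr hEq).injective.comp finProdFinEquiv.injective
    choose w hw using fun j : Fin S => ih (fun i => u (e (j, i)))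
    obtain ⟨A, B, hAB, hne, hsum⟩ := hcoll w
    by_cases hA : A.Nonempty
    · by_cases hB : B.Nonempty
      · refine ⟨∑ j ∈ A, w j, ?_⟩
        intro c hc1 hc2
        by_cases hc : c ≤ 2 ^ k
        · choose t ht1 ht2 using fun j : Fin S => hw j c hc1 hc
          obtain ⟨T, hT, hTsum⟩ := sum_blocks e he u A t (fun j _ => ht1 j) hA
          refine ⟨T, hT, ?_⟩
          rw [hTsum, Finset.sum_congr rfl (fun j _ => ht2 j), ← Finset.smul_sum]
        · push_neg at hc
          set b := c - 2 ^ k with hb_def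
          have hb1 : 1 ≤ b := by omega
          have hb2 : b ≤ 2 ^ k := by
            have : (2:ℕ) ^ (k+1) = 2 ^ k + 2 ^ k := by ring
            omega
          choose ta hta1 hta2 using fun j : Fin S =>
            hw j (2 ^ k) Nat.one_le_two_pow le_rfl
          choose tb htb1 htb2 using fun j : Fin S => hw j b hb1 hb2
          set t : Fin S → Finset (Fin (S ^ k)) :=
            fun j => if j ∈ A then ta j else tb j with ht_def
          have htne : ∀ j ∈ A ∪ B, (t j).Nonempty := by
            intro j hj
            by_cases h : j ∈ A <;> simp [ht_def, h, hta1 j, htb1 j]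
          obtain ⟨T, hT, hTsum⟩ := sum_blocks e he u (A ∪ B) t htne
            (hA.mono Finset.subset_union_left)
          refine ⟨T, hT, ?_⟩
          rw [hTsum, Finset.sum_union hAB]
          have hA' : ∑ j ∈ A, ∑ i ∈ t j, u (e (j, i)) = (2 ^ k) • ∑ j ∈ A, w j := by
            rw [Finset.smul_sum]
            refine Finset.sum_congr rfl fun j hj => ?_
            rw [ht_def]
            simp only [hj, if_pos]
            exact hta2 j
          have hB' : ∑ j ∈ B, ∑ i ∈ t j, u (e (j, i)) = b • ∑ j ∈ A, w j := by
            rw [hsum, Finset.smul_sum]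
            refine Finset.sum_congr rfl fun j hj => ?_
            have hjA : j ∉ A := Finset.disjoint_right.mp hAB hj
            rw [ht_def]
            simp only [hjA, if_neg, if_false]
            exact htb2 j
          rw [hA', hB', ← add_smul]
          congr 1
          omega
      · -- B empty
        rw [Finset.not_nonempty_iff_eq_empty] at hB
        refine ⟨0, ?_⟩
        intro c hc1 hc2
        choose t ht1 ht2 using fun j : Fin S => hw j 1 le_rfl Nat.one_le_two_pow
        obtain ⟨T, hT, hTsum⟩ := sum_blocks e he u A t (fun j _ => ht1 j) hA
        refine ⟨T, hT, ?_⟩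
        rw [hTsum, Finset.sum_congr rfl (fun j _ => ht2 j)]
        simp only [one_smul]
        rw [show (∑ j ∈ A, w j) = 0 by rw [hsum, hB]; simp]
        simp
    · -- A empty
      rw [Finset.not_nonempty_iff_eq_empty] at hA
      have hB : B.Nonempty := by
        rw [Finset.nonempty_iff_ne_empty]
        intro h
        exact hne ⟨hA, h⟩
      refine ⟨0, ?_⟩
      intro c hc1 hc2
      choose t ht1 ht2 using fun j : Fin S => hw j 1 le_rfl Nat.one_le_two_pow
      obtain ⟨T, hT, hTsum⟩ := sum_blocks e he u B t (fun j _ => ht1 j) hB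
      refine ⟨T, hT, ?_⟩
      rw [hTsum, Finset.sum_congr rfl (fun j _ => ht2 j)]
      simp only [one_smul]
      rw [show (∑ j ∈ B, w j) = 0 by rw [← hsum, hA]; simp]
      simp

theorem collision_to_zero_sum (p : ℕ) (hp : p.Prime) (n : ℕ)
    (S : ℕ) (hS : 1 ≤ S)
    (hcoll : ∀ v : Fin S → Fin n → ZMod p, HasCollision v)
    (u : Fin (S ^ Nat.clog 2 p) → Fin n → ZMod p) :
    ∃ B : Finset (Fin (S ^ Nat.clog 2 p)), B.Nonempty ∧ ∑ i ∈ B, u i = 0 := by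
  obtain ⟨w, hw⟩ := aux_scaled p n S hcoll (Nat.clog 2 p) u
  have hple : p ≤ 2 ^ Nat.clog 2 p := Nat.le_pow_clog (by norm_num) p
  obtain ⟨T, hT, hTsum⟩ := hw p hp.pos hple
  refine ⟨T, hT, ?_⟩
  rw [hTsum]
  ext x
  simp [nsmul_eq_mul, ZMod.natCast_self]
end

section
/- Let p be a prime, n : ℕ, and S ≥ 1 a natural number. Assume that every family v : Fin S → (Fin n → ZMod p) admits a collision, i.e., two disjoint finite subsets A, B of indices, not both empty, with Σ_{i∈A} v i = Σ_{i∈B} v i. Then for every k ≥ 1, every family u : Fin (S^k) → (Fin n → ZMod p) admits 2^k pairwise disjoint finite subsets A₁, …, A_{2^k} of indices, not all empty, whose sums Σ_{i∈A_j} u i are all equal. -/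
theorem collision_doubling_aux (p n S : ℕ)
    (hcoll : ∀ v : Fin S → Fin n → ZMod p, HasCollision v) :
    ∀ k, ∀ u : Fin (S ^ k) → Fin n → ZMod p,
    ∃ A : Fin (2 ^ k) → Finset (Fin (S ^ k)),
      (∀ j j', j ≠ j' → Disjoint (A j) (A j')) ∧
      (∃ j, A j ≠ ∅) ∧
      (∀ j j', ∑ i ∈ A j, u i = ∑ i ∈ A j', u i) := by
  intro k
  induction k with
  | zero =>
    intro u
    refine ⟨fun _ => Finset.univ, ?_, ?_, ?_⟩
    · intro j j' h
      exfalso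
      apply h
      have h1 := j.isLt
      have h2 := j'.isLt
      simp only [pow_zero] at h1 h2
      exact Fin.ext (by omega)
    · refine ⟨⟨0, by simp⟩, ?_⟩
      have h0 : (Finset.univ : Finset (Fin (S ^ 0))).Nonempty :=
        ⟨⟨0, by simp⟩, Finset.mem_univ _⟩
      exact h0.ne_empty
    · intro j j'
      have h1 := j.isLt
      have h2 := j'.isLt
      simp only [pow_zero] at h1 h2
      have : j = j' := Fin.ext (by omega)
      rw [this]
  | succ k IH =>
    intro u
    have hS2 : S * S ^ k = S ^ (k + 1) := by rw [pow_succ, Nat.mul_comm]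
    have h22 : 2 * 2 ^ k = 2 ^ (k + 1) := by rw [pow_succ, Nat.mul_comm]
    let e : Fin S × Fin (S ^ k) ≃ Fin (S ^ (k + 1)) :=
      finProdFinEquiv.trans (finCongr hS2)
    let e2 : Fin 2 × Fin (2 ^ k) ≃ Fin (2 ^ (k + 1)) :=
      finProdFinEquiv.trans (finCongr h22)
    have hub := fun b : Fin S => IH (fun i => u (e (b, i)))
    choose A hAdisj hAne hAsum using hub
    have hpos : 0 < 2 ^ k := Nat.pow_pos (by norm_num)
    let j0 : Fin (2 ^ k) := ⟨0, hpos⟩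
    set s : Fin S → Fin n → ZMod p := fun b => ∑ i ∈ A b j0, u (e (b, i)) with hs
    obtain ⟨P, Q, hPQ, hPQne, hPQsum⟩ := hcoll s
    let side : Fin 2 → Finset (Fin S) := fun ε => if ε = 0 then P else Q
    let C : Fin (2 ^ (k + 1)) → Finset (Fin (S ^ (k + 1))) :=
      fun j => (side (e2.symm j).1).biUnion
        (fun b => (A b (e2.symm j).2).image (fun i => e (b, i)))
    -- membership characterization
    have hmem : ∀ j x, x ∈ C j ↔ ∃ b ∈ side (e2.symm j).1,
        ∃ i ∈ A b (e2.symm j).2, e (b, i) = x := by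
      intro j x
      simp [C, Finset.mem_biUnion, Finset.mem_image]
    have einj : ∀ b i b' i', e (b, i) = e (b', i') → b = b' ∧ i = i' := by
      intro b i b' i' h
      have := e.injective h
      exact ⟨congrArg Prod.fst this, congrArg Prod.snd this⟩
    -- disjointness across sides
    have hside : ∀ ε ε' : Fin 2, ε ≠ ε' → Disjoint (side ε) (side ε') := by
      intro ε ε' h
      by_cases h0 : ε = 0
      · have h1 : ε' ≠ 0 := fun hh => h (h0.trans hh.symm)
        simp only [side, h0, if_pos rfl, if_neg h1]
        exact hPQ
      · by_cases h0' : ε' = 0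
        · simp only [side, if_neg h0, h0', if_pos rfl]
          exact hPQ.symm
        · exfalso
          apply h
          apply Fin.ext
          have hl := ε.isLt
          have hl' := ε'.isLt
          have hv : ε.val ≠ 0 := fun hv => h0 (Fin.ext (by simp [hv]))
          have hv' : ε'.val ≠ 0 := fun hv => h0' (Fin.ext (by simp [hv]))
          omega
    refine ⟨C, ?_, ?_, ?_⟩
    · -- pairwise disjoint
      intro j j' hjj'
      rw [Finset.disjoint_left]
      intro x hx hx'
      rw [hmem] at hx hx'
      obtain ⟨b, hb, i, hi, hbi⟩ := hx
      obtain ⟨b', hb', i', hi', hbi'⟩ := hx'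
      obtain ⟨rfl, rfl⟩ := einj _ _ _ _ (hbi.trans hbi'.symm)
      have hne : e2.symm j ≠ e2.symm j' := fun h => hjj' (e2.symm.injective h)
      by_cases hfst : (e2.symm j).1 = (e2.symm j').1
      · have hsnd : (e2.symm j).2 ≠ (e2.symm j').2 := by
          intro h
          exact hne (Prod.ext hfst h)
        exact Finset.disjoint_left.mp (hAdisj b _ _ hsnd) hi hi'
      · exact Finset.disjoint_left.mp (hside _ _ hfst) hb hb'
    · -- some set nonempty
      have hPorQ : P ≠ ∅ ∨ Q ≠ ∅ := by tauto
      have : ∃ ε : Fin 2, (side ε).Nonempty := by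
        rcases hPorQ with h | h
        · exact ⟨0, Finset.nonempty_of_ne_empty (by simpa [side] using h)⟩
        · exact ⟨1, Finset.nonempty_of_ne_empty (by simpa [side] using h)⟩
      obtain ⟨ε, b, hb⟩ := this
      obtain ⟨a, ha⟩ := hAne b
      obtain ⟨i, hi⟩ := Finset.nonempty_of_ne_empty ha
      refine ⟨e2 (ε, a), ?_⟩
      have : e (b, i) ∈ C (e2 (ε, a)) := by
        rw [hmem]
        refine ⟨b, ?_, i, ?_, rfl⟩
        · rw [Equiv.symm_apply_apply]; exact hb
        · rw [Equiv.symm_apply_apply]; exact hi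
      exact Finset.Nonempty.ne_empty ⟨_, this⟩
    · -- equal sums
      have hsumC : ∀ j, ∑ x ∈ C j, u x = ∑ b ∈ side (e2.symm j).1, s b := by
        intro j
        rw [Finset.sum_biUnion]
        · refine Finset.sum_congr rfl fun b hb => ?_
          rw [Finset.sum_image (fun i _ i' _ h => (einj _ _ _ _ h).2)]
          exact hAsum b (e2.symm j).2 j0
        · intro b hb b' hb' hbb'
          simp only [Function.onFun]
          rw [Finset.disjoint_left]
          intro x hx hx'
          simp only [Finset.mem_image] at hx hx'
          obtain ⟨i, hi, hix⟩ := hx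
          obtain ⟨i', hi', hix'⟩ := hx'
          exact hbb' (einj _ _ _ _ (hix.trans hix'.symm)).1
      have hsides : ∀ ε : Fin 2, ∑ b ∈ side ε, s b = ∑ b ∈ P, s b := by
        intro ε
        by_cases h0 : ε = 0
        · simp [side, h0]
        · simp [side, h0, hPQsum]
      intro j j'
      rw [hsumC, hsumC, hsides, hsides]

theorem collision_doubling (p : ℕ) (hp : p.Prime) (n : ℕ)
    (S : ℕ) (hS : 1 ≤ S)
    (hcoll : ∀ v : Fin S → Fin n → ZMod p, HasCollision v)
    (k : ℕ) (hk : 1 ≤ k) (u : Fin (S ^ k) → Fin n → ZMod p) :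
    ∃ A : Fin (2 ^ k) → Finset (Fin (S ^ k)),
      (∀ j j', j ≠ j' → Disjoint (A j) (A j')) ∧
      (∃ j, A j ≠ ∅) ∧
      (∀ j j', ∑ i ∈ A j, u i = ∑ i ∈ A j', u i) := by
  exact collision_doubling_aux p n S hcoll k u
end

section
/- For every n : ℕ, every family v : Fin (n+1) → (Fin n → ZMod 2) admits a nonempty zero-sum subsequence, i.e., a nonempty finite subset B of indices with Σ_{i∈B} v i = 0. -/
theorem zero_sum_subsequence_mod_two (n : ℕ)
    (v : Fin (n + 1) → Fin n → ZMod 2) :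
    ∃ B : Finset (Fin (n + 1)), B.Nonempty ∧ ∑ i ∈ B, v i = 0 := by
  obtain ⟨A, C, hne, heq⟩ :=
    Fintype.exists_ne_map_eq_of_card_lt
      (fun A : Finset (Fin (n + 1)) => ∑ i ∈ A, v i)
      (by
        simp only [Fintype.card_finset, Fintype.card_fun, Fintype.card_fin,
          ZMod.card]
        exact Nat.pow_lt_pow_right one_lt_two (Nat.lt_succ_self n))
  refine ⟨symmDiff A C, ?_, ?_⟩
  · rw [Finset.nonempty_iff_ne_empty]
    intro h
    exact hne (symmDiff_eq_bot.mp h)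
  · have h1 : ∑ i ∈ A \ C, v i = ∑ i ∈ A, v i - ∑ i ∈ A ∩ C, v i := by
      rw [eq_sub_iff_add_eq, ← Finset.sdiff_inter_self_left A C,
        Finset.sum_sdiff Finset.inter_subset_left]
    have h2 : ∑ i ∈ C \ A, v i = ∑ i ∈ C, v i - ∑ i ∈ A ∩ C, v i := by
      rw [eq_sub_iff_add_eq, Finset.inter_comm, ← Finset.sdiff_inter_self_left C A,
        Finset.sum_sdiff Finset.inter_subset_left]
    have hd : Disjoint (A \ C) (C \ A) := disjoint_sdiff_sdiff
    rw [symmDiff_def, Finset.sup_eq_union, Finset.sum_union hd, h1, h2, heq]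
    ext j
    have h2z : (2 : ZMod 2) = 0 := rfl
    simp only [Pi.add_apply, Pi.sub_apply, Pi.zero_apply, Finset.sum_apply]
    ring_nf
    rw [h2z, mul_zero, mul_zero, sub_zero]
end

section
/- Let G be a group and p a prime such that g^p lies in the commutator subgroup of G for every g ∈ G (i.e., G modulo its commutator subgroup has exponent dividing p). Then for every i ≥ 0 and every g in the i-th term of the lower central series of G, the element g^p lies in the (i+1)-st term of the lower central series. In particular, every quotient of consecutive terms of the lower central series of G is an elementary abelian p-group (it is abelian of exponent dividing p). -/
/-!
Modulo `G_{i+2}` a commutator `⁅a, b⁆` with `a ∈ G_i` is central, so `⁅a ^ p, b⁆ ≡ ⁅a, b⁆ ^ p`.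
By induction `a ^ p ∈ G_{i+1}`, so the generators `⁅a, b⁆` of `G_{i+1}` have `p`-th powers in
`G_{i+2}`; as `G_{i+1} / G_{i+2}` is abelian, `x ↦ x ^ p` is a homomorphism there, and the claim
passes to all of `G_{i+1}`.
-/

open scoped commutatorElement

theorem commutatorElement_pow_left_of_commute {G : Type*} [Group G] {a b : G}
    (h : Commute a ⁅a, b⁆) (k : ℕ) : ⁅a ^ k, b⁆ = ⁅a, b⁆ ^ k := by
  induction k with
  | zero => simp
  | succ k ih =>
    rw [pow_succ', commutatorElement_mul_left_eq_conj_mul, ih, (h.pow_right k).eq,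
      mul_inv_cancel_right, pow_succ]

namespace QuotientGroup

variable {G : Type*} [Group G] {N : Subgroup G} [N.Normal]

theorem commute_mk_of_commutatorElement_mem {a b : G} (h : ⁅a, b⁆ ∈ N) :
    Commute (a : G ⧸ N) b := by
  rwa [← commutatorElement_eq_one_iff_commute, ← mk'_apply, ← mk'_apply,
    ← map_commutatorElement, mk'_apply, eq_one_iff]

theorem pow_mem_of_mem_closure {S : Set G} (hS : ⁅Subgroup.closure S, Subgroup.closure S⁆ ≤ N)
    {n : ℕ} (hpow : ∀ s ∈ S, s ^ n ∈ N) {x : G} (hx : x ∈ Subgroup.closure S) : x ^ n ∈ N := by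
  rw [← eq_one_iff, mk_pow]
  induction hx using Subgroup.closure_induction with
  | mem s hs => rw [← mk_pow, eq_one_iff]; exact hpow s hs
  | one => simp
  | mul y z hy hz ihy ihz =>
    have hyz := commute_mk_of_commutatorElement_mem (hS (Subgroup.commutator_mem_commutator hy hz))
    rw [mk_mul, hyz.mul_pow, ihy, ihz, one_mul]
  | inv y _ ih => rw [mk_inv, inv_pow, ih, inv_one]

end QuotientGroup

namespace Subgroup

variable {G : Type*} [Group G]

theorem mk_commutatorElement_pow_left {i : ℕ} {a : G}
    (ha : a ∈ (⊤ : Subgroup G).lowerCentralSeries i) (b : G) (k : ℕ) :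
    ((⁅a ^ k, b⁆ : G) : G ⧸ (⊤ : Subgroup G).lowerCentralSeries (i + 2)) =
      ((⁅a, b⁆ : G) : G ⧸ (⊤ : Subgroup G).lowerCentralSeries (i + 2)) ^ k := by
  have hcomm : Commute (a : G ⧸ (⊤ : Subgroup G).lowerCentralSeries (i + 2)) (⁅a, b⁆ : G) :=
    (QuotientGroup.commute_mk_of_commutatorElement_mem <| commutator_mem_commutator
      (commutator_mem_commutator ha (mem_top b)) (mem_top a)).symm
  simp only [← QuotientGroup.mk'_apply, map_commutatorElement, map_pow] at hcomm ⊢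
  exact commutatorElement_pow_left_of_commute hcomm k

theorem pow_mem_lowerCentralSeries_add_two {i n : ℕ}
    (h : ∀ g ∈ (⊤ : Subgroup G).lowerCentralSeries i,
      g ^ n ∈ (⊤ : Subgroup G).lowerCentralSeries (i + 1))
    {g : G} (hg : g ∈ (⊤ : Subgroup G).lowerCentralSeries (i + 1)) :
    g ^ n ∈ (⊤ : Subgroup G).lowerCentralSeries (i + 2) := by
  rw [mem_lowerCentralSeries_succ_iff] at hg
  refine QuotientGroup.pow_mem_of_mem_closure (N := (⊤ : Subgroup G).lowerCentralSeries (i + 2))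
    (commutator_mono le_rfl le_top) ?_ hg
  rintro _ ⟨a, ha, b, -, rfl⟩
  rw [← QuotientGroup.eq_one_iff, QuotientGroup.mk_pow, ← mk_commutatorElement_pow_left ha,
    QuotientGroup.eq_one_iff]
  exact commutator_mem_commutator (h a ha) (mem_top b)

end Subgroup

theorem pow_p_mem_next_lowerCentralSeries_general (G : Type*) [Group G]
    (p : ℕ)
    (hexp : ∀ g : G, g ^ p ∈ commutator G) :
    ∀ i : ℕ, ∀ g ∈ (⊤ : Subgroup G).lowerCentralSeries i,
      g ^ p ∈ (⊤ : Subgroup G).lowerCentralSeries (i + 1) := by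
  intro i
  induction i with
  | zero =>
    intro g _
    rw [Subgroup.top_lowerCentralSeries_one]
    exact hexp g
  | succ i ih => exact fun g hg => Subgroup.pow_mem_lowerCentralSeries_add_two ih hg

theorem pow_p_mem_next_lowerCentralSeries (G : Type*) [Group G]
    (p : ℕ) (hp : p.Prime)
    (hexp : ∀ g : G, g ^ p ∈ commutator G) :
    ∀ i : ℕ, ∀ g ∈ (⊤ : Subgroup G).lowerCentralSeries i,
      g ^ p ∈ (⊤ : Subgroup G).lowerCentralSeries (i + 1) :=
  pow_p_mem_next_lowerCentralSeries_general G p hexp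
end

section
/- Let G be a finite nilpotent group, p a prime, and Γ a set of generators of G (Subgroup.closure Γ = ⊤). For g ∈ G, write orderOf g = p^{a_g} * m_g where p does not divide m_g. Then the subgroup of G generated by { g ^ m_g : g ∈ Γ } equals the (unique) Sylow p-subgroup of G, i.e., for any Sylow p-subgroup P of G, Subgroup.closure { g ^ m_g : g ∈ Γ } = P. -/
/-!
In a finite nilpotent group the Sylow `p`-subgroup `P` is a retract of `G`: the coordinate of
`G ≅ ∏_q Sylow q` at `p` is injective on `P`, since a `p`-element has trivial image in every
`q`-group with `q ≠ p`; composing it with the inverse of its restriction to `P` gives a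
retraction `ρ : G →* P`. For a generator `g`, `g ^ m_g` has
`p`-power order, so lies in `P`, and `(ρ g) ^ m_g = ρ (g ^ m_g) = g ^ m_g`. As `ρ g` is a
`p`-element and `m_g` is prime to `p`, `ρ g` is a power of `g ^ m_g`. Hence `P = ρ G` is generated
by the `ρ g`, which all lie in the closure of the `g ^ m_g`.
-/

open Subgroup

section

variable {G : Type*} [Group G]

theorem IsPGroup.map_eq_one_of_coprime {p q : ℕ} {K H : Type*} [Group K] [Group H]
    (hK : IsPGroup p K) (hH : IsPGroup q H) (hpq : p.Coprime q) (φ : K →* H) (x : K) :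
    φ x = 1 :=
  orderOf_eq_one_iff.mp <|
    (hH.orderOf_coprime (hK.orderOf_coprime hpq x).symm (φ x)).eq_one_of_dvd (orderOf_map_dvd φ x)

theorem Subgroup.exists_retraction_of_injective_comp_subtype {H : Subgroup G} [Finite H]
    (ρ : G →* H) (hρ : Function.Injective (ρ.comp H.subtype)) :
    ∃ ρ' : G →* H, ∀ x : H, ρ' x = x := by
  let σ := MulEquiv.ofBijective _ (Finite.injective_iff_bijective.mp hρ)
  exact ⟨σ.symm.toMonoidHom.comp ρ, σ.symm_apply_apply⟩

theorem Sylow.exists_injective_comp_subtype [Finite G] [Group.IsNilpotent G] {p : ℕ}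
    [hp : Fact p.Prime] (P : Sylow p G) :
    ∃ ρ : G →* P, Function.Injective (ρ.comp (P : Subgroup G).subtype) := by
  by_cases hpG : p ∣ Nat.card G
  swap
  · have : Subsingleton P := by
      rw [← Finite.card_le_one_iff_subsingleton, P.card_eq_multiplicity,
        Nat.factorization_eq_zero_of_not_dvd hpG, pow_zero]
    exact ⟨1, Function.injective_of_subsingleton _⟩
  have hp' : p ∈ (Nat.card G).primeFactors :=
    Nat.mem_primeFactors.mpr ⟨hp.out, hpG, Nat.card_pos.ne'⟩
  let e := Sylow.directProductOfNormal (G := G) fun P => inferInstance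
  refine ⟨(Pi.evalMonoidHom _ P).comp ((Pi.evalMonoidHom _ ⟨p, hp'⟩).comp e.symm.toMonoidHom),
    ?_⟩
  rw [injective_iff_map_eq_one]
  intro y hy
  suffices e.symm y = 1 by simpa using this
  funext ⟨q, hq⟩ Q
  have : Fact q.Prime := ⟨Nat.prime_of_mem_primeFactors hq⟩
  by_cases hqp : q = p
  · subst hqp
    have := Sylow.unique_of_normal P inferInstance
    obtain rfl := Subsingleton.elim Q P
    exact hy
  · exact P.isPGroup'.map_eq_one_of_coprime Q.isPGroup'
      ((Nat.coprime_primes hp.out this.out).mpr (Ne.symm hqp))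
      ((Pi.evalMonoidHom _ Q).comp ((Pi.evalMonoidHom _ ⟨q, hq⟩).comp
        (e.symm.toMonoidHom.comp (P : Subgroup G).subtype))) y

theorem Sylow.exists_retraction [Finite G] [Group.IsNilpotent G] {p : ℕ} [Fact p.Prime]
    (P : Sylow p G) : ∃ ρ : G →* P, ∀ x : P, ρ x = x :=
  let ⟨ρ, hρ⟩ := P.exists_injective_comp_subtype
  exists_retraction_of_injective_comp_subtype ρ hρ

theorem Sylow.pow_mem_of_orderOf_eq_mul [Finite G] {p : ℕ} [Fact p.Prime] (P : Sylow p G)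
    [P.Normal] {g : G} {a m : ℕ} (hg : orderOf g = p ^ a * m) (hm : m ≠ 0) : g ^ m ∈ P := by
  have hpow : orderOf (g ^ m) = p ^ a := by
    rw [orderOf_pow_of_dvd hm (hg ▸ dvd_mul_left m _), hg,
      Nat.mul_div_cancel _ (Nat.pos_of_ne_zero hm)]
  obtain ⟨Q, hQ⟩ := (IsPGroup.of_card ((Nat.card_zpowers _).trans hpow)).exists_le_sylow
  have := Sylow.unique_of_normal P inferInstance
  exact Subsingleton.elim Q P ▸ hQ (mem_zpowers _)

theorem Sylow.coe_retraction_mem_zpowers_pow {p : ℕ} (P : Sylow p G) {ρ : G →* P}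
    (hρ : ∀ x : P, ρ x = x) {g : G} {m : ℕ} (hgm : g ^ m ∈ P) (hm : p.Coprime m) :
    (ρ g : G) ∈ zpowers (g ^ m) := by
  have hpow : (ρ g : G) ^ m = g ^ m := by
    rw [← Subgroup.coe_pow, ← map_pow, hρ ⟨_, hgm⟩]
  rw [← hpow, mem_zpowers_pow_iff, Nat.gcd_comm, Subgroup.orderOf_coe]
  exact P.isPGroup'.orderOf_coprime hm _

theorem Sylow.closure_pow_eq_of_retraction {p : ℕ} (P : Sylow p G) {ρ : G →* P}
    (hρ : ∀ x : P, ρ x = x) {Γ : Set G} (hΓ : closure Γ = ⊤) (m : G → ℕ)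
    (hmP : ∀ g ∈ Γ, g ^ m g ∈ P) (hm : ∀ g ∈ Γ, p.Coprime (m g)) :
    closure ((fun g => g ^ m g) '' Γ) = P := by
  apply le_antisymm
  · rw [closure_le]
    rintro _ ⟨g, hg, rfl⟩
    exact hmP g hg
  · have hrange :
        ((P : Subgroup G).subtype.comp ρ).range ≤ closure ((fun g => g ^ m g) '' Γ) := by
      rw [MonoidHom.range_eq_map, ← hΓ, MonoidHom.map_closure, closure_le]
      rintro _ ⟨g, hg, rfl⟩
      exact zpowers_le.mpr (subset_closure (Set.mem_image_of_mem _ hg))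
        (P.coe_retraction_mem_zpowers_pow hρ (hmP g hg) (hm g hg))
    intro x hx
    have hx' : (ρ x : G) = x := congrArg Subtype.val (hρ ⟨x, hx⟩)
    exact hx' ▸ hrange ⟨x, rfl⟩

end

theorem closure_pPrimeParts_eq_sylow (G : Type*) [Group G] [Finite G]
    [Group.IsNilpotent G] (p : ℕ) (hp : p.Prime)
    (Γ : Set G) (hΓ : Subgroup.closure Γ = ⊤)
    (a m : G → ℕ)
    (ham : ∀ g : G, orderOf g = p ^ a g * m g)
    (hm : ∀ g : G, ¬ p ∣ m g)
    (P : Sylow p G) :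
    Subgroup.closure ((fun g => g ^ m g) '' Γ) = (P : Subgroup G) := by
  have : Fact p.Prime := ⟨hp⟩
  have hm0 (g : G) : m g ≠ 0 := fun h => hm g (h ▸ dvd_zero p)
  obtain ⟨ρ, hρ⟩ := P.exists_retraction
  exact P.closure_pow_eq_of_retraction hρ hΓ m
    (fun g _ => P.pow_mem_of_orderOf_eq_mul (ham g) (hm0 g))
    (fun g _ => (Nat.Prime.coprime_iff_not_dvd hp).mpr (hm g))
end

section
/- Let G be a group, L a finite subgroup of the center of G, H a finite subgroup of G, c : L → ℂ a function, and P_c : MonoidAlgebra ℂ G → MonoidAlgebra ℂ G the ℂ-linear map with P_c(single x 1) = Σ_{z∈L} c(z) • single (x*z) 1. For a ∈ G let |aH⟩ := Σ_{h∈H} single (a*h) 1 ∈ MonoidAlgebra ℂ G. Then for all a, x₁, x₂ ∈ G: (i) if x₁⁻¹ * x₂ ∈ H then P_c(|aH⟩) * single x₁⁻¹ 1 = P_c(|aH⟩) * single x₂⁻¹ 1; and (ii) if x₁⁻¹ * x₂ does not lie in the subgroup L ⊔ H (whose underlying set is {l*h : l ∈ L, h ∈ H}, since L is central), then the supports (as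 finitely supported functions G → ℂ) of P_c(|aH⟩) * single x₁⁻¹ 1 and P_c(|aH⟩) * single x₂⁻¹ 1 are disjoint. -/
/-!
Since `L` is central, `P_c` commutes with right multiplication by `single g 1`. The coset state
`|aH⟩` is fixed by right multiplication by elements of `H`, hence so is `P_c |aH⟩`, which gives (i).
The support of `P_c |aH⟩` lies in the left coset `a (L ⊔ H)`, and the right translates by `x₁⁻¹`
and `x₂⁻¹` of a subset of a left coset `aK` can only meet when `x₁⁻¹ x₂ ∈ K`, which gives (ii).
-/

open MonoidAlgebra
open scoped Pointwise

section

variable {k G : Type*} [Group G]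

section Semiring

variable [Semiring k]

theorem mul_single_inv_eq_of_inv_mul_mem {H : Subgroup G} {v : MonoidAlgebra k G}
    (hv : ∀ h ∈ H, v * single h 1 = v) {x₁ x₂ : G} (hx : x₁⁻¹ * x₂ ∈ H) (r : k) :
    v * single x₁⁻¹ r = v * single x₂⁻¹ r := by
  calc v * single x₁⁻¹ r = v * single (x₁⁻¹ * x₂) 1 * single x₂⁻¹ r := by
        rw [mul_assoc, single_mul_single, one_mul, mul_inv_cancel_right]
    _ = v * single x₂⁻¹ r := by rw [hv _ hx]

theorem disjoint_support_mul_single_inv {K : Subgroup G} {f : MonoidAlgebra k G} {a : G}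
    (hf : (f.coeff.support : Set G) ⊆ a • (K : Set G)) {x₁ x₂ : G} (hx : x₁⁻¹ * x₂ ∉ K)
    (r : k) : Disjoint (f * single x₁⁻¹ r).coeff.support (f * single x₂⁻¹ r).coeff.support := by
  classical
  refine Finset.disjoint_left.mpr fun g hg₁ hg₂ => hx ?_
  obtain ⟨s₁, hs₁, rfl⟩ := Finset.mem_image.mp (support_coeff_mul_single_subset _ _ _ hg₁)
  obtain ⟨s₂, hs₂, hs⟩ := Finset.mem_image.mp (support_coeff_mul_single_subset _ _ _ hg₂)
  have hK₁ := Set.mem_smul_set_iff_inv_smul_mem.mp (hf hs₁)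
  have hK₂ := Set.mem_smul_set_iff_inv_smul_mem.mp (hf hs₂)
  obtain rfl : s₁ = s₂ * x₂⁻¹ * x₁ := by rw [hs, inv_mul_cancel_right]
  convert mul_mem (inv_mem hK₁) hK₂ using 1
  simp only [smul_eq_mul]
  group

variable (k) in
noncomputable def cosetState (a : G) (H : Subgroup G) [Fintype H] : MonoidAlgebra k G :=
  ∑ h : H, single (a * (h : G)) 1

theorem cosetState_mul_single_of_mem {H : Subgroup G} [Fintype H] (a : G) {h : G} (hh : h ∈ H) :
    cosetState k a H * single h 1 = cosetState k a H := by
  simp only [cosetState, Finset.sum_mul, single_mul_single, mul_one]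
  exact Fintype.sum_equiv (Equiv.mulRight ⟨h, hh⟩) _ _ fun h' => by simp [mul_assoc]

section

variable {L : Subgroup G} [Fintype L] {c : L → k} {P : MonoidAlgebra k G →ₗ[k] MonoidAlgebra k G}
  (hP : ∀ x : G, P (single x 1) = ∑ z : L, c z • single (x * (z : G)) (1 : k))
include hP

theorem support_map_single_subset (x : G) :
    ((P (single x 1)).coeff.support : Set G) ⊆ x • (L : Set G) := by
  classical
  intro g hg
  rw [hP, coeff_sum, Finset.mem_coe] at hg
  obtain ⟨z, -, hz⟩ := Finset.mem_biUnion.mp (Finsupp.support_finsetSum hg)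
  rw [coeff_smul, coeff_single] at hz
  obtain rfl := Finset.mem_singleton.mp (Finsupp.support_single_subset (Finsupp.support_smul hz))
  exact Set.smul_mem_smul_set z.2

theorem support_map_cosetState_subset (H : Subgroup G) [Fintype H] (a : G) :
    ((P (cosetState k a H)).coeff.support : Set G) ⊆ a • ((L ⊔ H : Subgroup G) : Set G) := by
  classical
  intro g hg
  rw [cosetState, map_sum, coeff_sum, Finset.mem_coe] at hg
  obtain ⟨h, -, hh⟩ := Finset.mem_biUnion.mp (Finsupp.support_finsetSum hg)
  obtain ⟨z, hz, rfl⟩ := support_map_single_subset hP _ hh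
  dsimp only
  rw [smul_eq_mul, mul_assoc]
  exact Set.smul_mem_smul_set (mul_mem (Subgroup.mem_sup_right h.2) (Subgroup.mem_sup_left hz))

end

end Semiring

theorem map_mul_single_of_le_center [CommSemiring k] {L : Subgroup G} [Fintype L]
    (hL : L ≤ Subgroup.center G) {c : L → k} {P : MonoidAlgebra k G →ₗ[k] MonoidAlgebra k G}
    (hP : ∀ x : G, P (single x 1) = ∑ z : L, c z • single (x * (z : G)) (1 : k))
    (f : MonoidAlgebra k G) (g : G) : P (f * single g 1) = P f * single g 1 := by
  induction f using MonoidAlgebra.induction_on with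
  | of x =>
    simp only [of_apply, single_mul_single, mul_one, hP, Finset.sum_mul, smul_mul_assoc]
    refine Finset.sum_congr rfl fun z _ => ?_
    rw [mul_assoc, mul_assoc, (Subgroup.mem_center_iff.mp (hL z.2) g).symm]
  | add f₁ f₂ h₁ h₂ => rw [add_mul, map_add, h₁, h₂, map_add, add_mul]
  | smul r f h => rw [smul_mul_assoc, map_smul, h, map_smul, smul_mul_assoc]

end

theorem P_c_coset_states (G : Type*) [Group G]
    (L : Subgroup G) [Fintype L] (hL : L ≤ Subgroup.center G)
    (H : Subgroup G) [Fintype H]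
    (c : L → ℂ)
    (P : MonoidAlgebra ℂ G →ₗ[ℂ] MonoidAlgebra ℂ G)
    (hP : ∀ x : G, P (single x 1) =
      ∑ z : L, c z • single (x * (z : G)) (1 : ℂ)) :
    ∀ a x₁ x₂ : G,
      (x₁⁻¹ * x₂ ∈ H →
        P (∑ h : H, single (a * (h : G)) (1 : ℂ)) * single x₁⁻¹ (1 : ℂ) =
          P (∑ h : H, single (a * (h : G)) (1 : ℂ)) * single x₂⁻¹ (1 : ℂ)) ∧
      (x₁⁻¹ * x₂ ∉ L ⊔ H →
        Disjoint
          (P (∑ h : H, single (a * (h : G)) (1 : ℂ)) * single x₁⁻¹ (1 : ℂ)).coeff.support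
          (P (∑ h : H, single (a * (h : G)) (1 : ℂ)) * single x₂⁻¹ (1 : ℂ)).coeff.support) := by
  intro a x₁ x₂
  refine ⟨fun hx => ?_, fun hx => ?_⟩
  · refine mul_single_inv_eq_of_inv_mul_mem (v := P (cosetState ℂ a H)) (fun h hh => ?_) hx 1
    rw [← map_mul_single_of_le_center hL hP, cosetState_mul_single_of_mem a hh]
  · exact disjoint_support_mul_single_inv (support_map_cosetState_subset hP H a) hx 1
end

section
/- Let G be a finite group, H a subgroup of G, V a complex inner product space, and v : G → V. Then the following are equivalent: (1) for all x, y ∈ G, ⟪v x, v y⟫ = 1 if x⁻¹*y ∈ H and ⟪v x, v y⟫ = 0 otherwise; (2) every v x is a unit vector, v x = v y whenever x and y lie in the same left coset of H (i.e., x⁻¹*y ∈ H), and ⟪v x, v y⟫ = 0 whenever x⁻¹*y ∉ H. -/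
section

variable {𝕜 E : Type*} [RCLike 𝕜] [NormedAddCommGroup E] [InnerProductSpace 𝕜 E]

theorem norm_eq_one_iff_inner_self_eq_one {x : E} : ‖x‖ = 1 ↔ inner 𝕜 x x = 1 := by
  rw [inner_self_eq_norm_sq_to_K]
  norm_cast
  exact (pow_eq_one_iff_of_nonneg (norm_nonneg x) two_ne_zero).symm

open scoped Classical in
/-- Forward direction: the equality case of Cauchy–Schwarz (`inner_eq_one_iff_of_norm_eq_one`)
turns `⟪v x, v y⟫ = 1` between unit vectors into `v x = v y`. -/
theorem inner_eq_ite_rel_iff {ι : Type*} (r : ι → ι → Prop) (hr : ∀ x, r x x) (v : ι → E) :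
    (∀ x y, inner 𝕜 (v x) (v y) = if r x y then (1 : 𝕜) else 0) ↔
      ((∀ x, ‖v x‖ = 1) ∧ (∀ x y, r x y → v x = v y) ∧
        (∀ x y, ¬ r x y → inner 𝕜 (v x) (v y) = (0 : 𝕜))) := by
  constructor
  · intro h
    have hnorm : ∀ x, ‖v x‖ = 1 := fun x =>
      norm_eq_one_iff_inner_self_eq_one.mpr (by rw [h x x, if_pos (hr x)])
    refine ⟨hnorm, fun x y hxy => ?_, fun x y hxy => by simpa [hxy] using h x y⟩
    exact (inner_eq_one_iff_of_norm_eq_one (hnorm x) (hnorm y)).mp (by simpa [hxy] using h x y)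
  · rintro ⟨hnorm, heq, horth⟩ x y
    split_ifs with hxy
    · rw [← heq x y hxy]
      exact inner_self_eq_one_of_norm_eq_one (hnorm x)
    · exact horth x y hxy

end

open scoped Classical in
theorem purification_characterization_general
    (G : Type*) [Group G] (H : Subgroup G)
    (V : Type*) [NormedAddCommGroup V] [InnerProductSpace ℂ V]
    (v : G → V) :
    (∀ x y : G, inner ℂ (v x) (v y) =
        (if x⁻¹ * y ∈ H then (1 : ℂ) else 0)) ↔
      ((∀ x : G, ‖v x‖ = 1) ∧
       (∀ x y : G, x⁻¹ * y ∈ H → v x = v y) ∧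
       (∀ x y : G, x⁻¹ * y ∉ H → inner ℂ (v x) (v y) = (0 : ℂ))) :=
  inner_eq_ite_rel_iff (fun x y => x⁻¹ * y ∈ H) (fun _ => by simp) v

open scoped Classical in
theorem purification_characterization
    (G : Type*) [Group G] [Finite G] (H : Subgroup G)
    (V : Type*) [NormedAddCommGroup V] [InnerProductSpace ℂ V]
    (v : G → V) :
    (∀ x y : G, inner ℂ (v x) (v y) =
        (if x⁻¹ * y ∈ H then (1 : ℂ) else 0)) ↔
      ((∀ x : G, ‖v x‖ = 1) ∧
       (∀ x y : G, x⁻¹ * y ∈ H → v x = v y) ∧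
       (∀ x y : G, x⁻¹ * y ∉ H → inner ℂ (v x) (v y) = (0 : ℂ))) :=
  purification_characterization_general G H V v
end
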